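/- arXiv:0804.1943 — 2 statements merged into one kernel-verified Lean document; each statement's English description precedes it below -/
import Mathlib

section
/- Let Φ_t be a continuous linear flow on a real vector bundle V → M over a compact base, equipped with a continuous fiberwise norm |·| and a constant α > 0, which decomposes as an invariant Whitney sum V = S ⊕ U with |Φ_t(v)| ≤ e^{-αt}|v| for v ∈ S, t ≥ 0, and |Φ_t(v)| ≥ e^{αt}|v| for v ∈ U, t ≥ 0. Define B_1 = {v : |v^s| ≤ 1, |v^u| ≤ 1} and B_0 = {v : |v^s| ≤ 1, |v^u| = 1}, where v = v^s + v^u is the decomposition. Then (B_1, B_0) is an index pair for the zero section M_0 of V: (1) cl(B_1 ∖ B_0) = B_1 is an isolating neighborhood of M_0; (2) B_0 is positively invariant relative to B_1; (3) every orbit leaving B_1 in forward time exits through B_0. -/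
/-!
Write `s = ‖v^s‖` and `u = ‖v^u‖`. Along every orbit `s` decays and `u` grows, so a point of
`B₁` can only leave `B₁` through `u = 1`, and by monotonicity of `t ↦ u (Φ_t x)` it does so
at the first time `u` reaches `1`; an orbit staying in `B₁` for all times has `s ≤ e^{-αt}`
(look backward) and `u ≤ e^{-αt}` (look forward), hence lies on the zero section.

Continuity of `pu` on each fiber is itself a consequence of hyperbolicity: comparing `v`
with `w = Φ_{-1} v` gives `(1 - e^{-2α}) ‖pu v‖ ≤ ‖v‖ + e^{-α} ‖w‖`, and the right-hand side
tends to `0` with `v` since the flow fixes the zero section.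
-/

open Filter Topology Set

lemma continuous_of_norm_le_of_tendsto_zero {E F G : Type*} [SeminormedAddCommGroup E]
    [SeminormedAddCommGroup F] [FunLike G E F] [AddMonoidHomClass G E F] (f : G) {g : E → ℝ}
    (hg : Tendsto g (𝓝 0) (𝓝 0)) (hf : ∀ v, ‖f v‖ ≤ g v) : Continuous f :=
  continuous_of_continuousAt_zero f <| by
    rw [ContinuousAt, map_zero]
    exact squeeze_zero_norm hf hg

lemma le_zero_of_forall_le_exp_neg {a α : ℝ} (hα : 0 < α)
    (h : ∀ t ≥ (0 : ℝ), a ≤ Real.exp (-(α * t))) : a ≤ 0 :=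
  ge_of_tendsto (Real.tendsto_exp_neg_atTop_nhds_zero.comp (tendsto_id.const_mul_atTop hα))
    (eventually_atTop.2 ⟨0, h⟩)

section Lyapunov

variable {X : Type*} {Φ : ℝ → X → X} {s u : X → ℝ} {α : ℝ}

lemma apply_flow_le_of_contracting (hα : 0 ≤ α) (hs : ∀ x, 0 ≤ s x)
    (hS : ∀ t ≥ (0 : ℝ), ∀ x, s (Φ t x) ≤ Real.exp (-(α * t)) * s x)
    {t : ℝ} (ht : 0 ≤ t) (x : X) : s (Φ t x) ≤ s x :=
  (hS t ht x).trans <| mul_le_of_le_one_left (hs x) <|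
    Real.exp_le_one_iff.2 (neg_nonpos.2 (mul_nonneg hα ht))

lemma le_apply_flow_of_expanding (hα : 0 ≤ α) (hu : ∀ x, 0 ≤ u x)
    (hU : ∀ t ≥ (0 : ℝ), ∀ x, Real.exp (α * t) * u x ≤ u (Φ t x))
    {t : ℝ} (ht : 0 ≤ t) (x : X) : u x ≤ u (Φ t x) :=
  (le_mul_of_one_le_left (hu x) (Real.one_le_exp (mul_nonneg hα ht))).trans (hU t ht x)

lemma monotone_apply_flow_of_expanding (hΦadd : ∀ s t x, Φ (s + t) x = Φ s (Φ t x))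
    (hα : 0 ≤ α) (hu : ∀ x, 0 ≤ u x)
    (hU : ∀ t ≥ (0 : ℝ), ∀ x, Real.exp (α * t) * u x ≤ u (Φ t x)) (x : X) :
    Monotone fun t => u (Φ t x) := by
  intro a b hab
  have h := le_apply_flow_of_expanding hα hu hU (sub_nonneg.2 hab) (Φ a x)
  rwa [← hΦadd, sub_add_cancel] at h

lemma le_zero_of_forall_apply_flow_le_one (hα : 0 < α) (hΦinv : ∀ t x, Φ t (Φ (-t) x) = x)
    (hS : ∀ t ≥ (0 : ℝ), ∀ x, s (Φ t x) ≤ Real.exp (-(α * t)) * s x)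
    (hU : ∀ t ≥ (0 : ℝ), ∀ x, Real.exp (α * t) * u x ≤ u (Φ t x))
    {x : X} (h : ∀ t, s (Φ t x) ≤ 1 ∧ u (Φ t x) ≤ 1) : s x ≤ 0 ∧ u x ≤ 0 := by
  constructor <;> refine le_zero_of_forall_le_exp_neg hα fun t ht => ?_
  · calc s x = s (Φ t (Φ (-t) x)) := by rw [hΦinv]
      _ ≤ Real.exp (-(α * t)) * s (Φ (-t) x) := hS t ht _
      _ ≤ Real.exp (-(α * t)) * 1 := by gcongr; exact (h (-t)).1
      _ = Real.exp (-(α * t)) := mul_one _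
  · calc u x = Real.exp (-(α * t)) * (Real.exp (α * t) * u x) := by
          rw [← mul_assoc, ← Real.exp_add, neg_add_cancel, Real.exp_zero, one_mul]
      _ ≤ Real.exp (-(α * t)) * 1 := by gcongr; exact (hU t ht x).trans (h t).2
      _ = Real.exp (-(α * t)) := mul_one _

lemma apply_flow_mem_exit_set (hα : 0 ≤ α) (hs : ∀ x, 0 ≤ s x) (hu : ∀ x, 0 ≤ u x)
    (hS : ∀ t ≥ (0 : ℝ), ∀ x, s (Φ t x) ≤ Real.exp (-(α * t)) * s x)
    (hU : ∀ t ≥ (0 : ℝ), ∀ x, Real.exp (α * t) * u x ≤ u (Φ t x))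
    {x : X} (hx : s x ≤ 1 ∧ u x = 1) {t : ℝ} (ht : 0 ≤ t) (hΦt : u (Φ t x) ≤ 1) :
    s (Φ t x) ≤ 1 ∧ u (Φ t x) = 1 :=
  ⟨(apply_flow_le_of_contracting hα hs hS ht x).trans hx.1,
    hΦt.antisymm (hx.2 ▸ le_apply_flow_of_expanding hα hu hU ht x)⟩

lemma exists_exit_time (hΦ0 : ∀ x, Φ 0 x = x) (hΦadd : ∀ s t x, Φ (s + t) x = Φ s (Φ t x))
    (hα : 0 ≤ α) (hs : ∀ x, 0 ≤ s x) (hu : ∀ x, 0 ≤ u x)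
    (hS : ∀ t ≥ (0 : ℝ), ∀ x, s (Φ t x) ≤ Real.exp (-(α * t)) * s x)
    (hU : ∀ t ≥ (0 : ℝ), ∀ x, Real.exp (α * t) * u x ≤ u (Φ t x))
    {x : X} (hcont : Continuous fun t => u (Φ t x)) (hx : s x ≤ 1 ∧ u x ≤ 1)
    {t' : ℝ} (ht' : 0 < t') (hout : ¬(s (Φ t' x) ≤ 1 ∧ u (Φ t' x) ≤ 1)) :
    ∃ tm ≥ (0 : ℝ), (s (Φ tm x) ≤ 1 ∧ u (Φ tm x) = 1) ∧
      ∀ t, 0 ≤ t → t ≤ tm → s (Φ t x) ≤ 1 ∧ u (Φ t x) ≤ 1 := by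
  have hs_le : ∀ t ≥ (0 : ℝ), s (Φ t x) ≤ 1 := fun t ht =>
    (apply_flow_le_of_contracting hα hs hS ht x).trans hx.1
  have hu_gt : 1 < u (Φ t' x) := by
    by_contra h
    exact hout ⟨hs_le t' ht'.le, not_lt.1 h⟩
  obtain ⟨tm, ⟨htm, -⟩, hutm⟩ := intermediate_value_Icc ht'.le hcont.continuousOn
    ⟨by rw [hΦ0]; exact hx.2, hu_gt.le⟩
  refine ⟨tm, htm, ⟨hs_le tm htm, hutm⟩, fun t ht htle => ⟨hs_le t ht, ?_⟩⟩
  exact hutm ▸ monotone_apply_flow_of_expanding hΦadd hα hu hU x htle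

lemma subset_interior_setOf_le_one [TopologicalSpace X] (hs : Continuous s)
    (hu : Continuous u) :
    {x | s x < 1 ∧ u x < 1} ⊆ interior {x | s x ≤ 1 ∧ u x ≤ 1} :=
  interior_maximal (fun _ hx => ⟨hx.1.le, hx.2.le⟩)
    ((isOpen_lt hs continuous_const).inter (isOpen_lt hu continuous_const))

end Lyapunov

section Bundle

variable {B : Type*} {E : B → Type*} [∀ b, NormedAddCommGroup (E b)]
  [∀ b, NormedSpace ℝ (E b)] {Φ : ℝ → (Σ b, E b) → (Σ b, E b)}
  {ps pu : ∀ b, E b →ₗ[ℝ] E b} {α : ℝ}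

lemma stable_add_unstable_apply (hsum : ∀ b, ps b + pu b = LinearMap.id) (b : B) (v : E b) :
    ps b v + pu b v = v := by
  simpa using LinearMap.congr_fun (hsum b) v

lemma continuous_stable (hsum : ∀ b, ps b + pu b = LinearMap.id) {b : B}
    (hpu : Continuous (pu b)) : Continuous (ps b) :=
  (continuous_id.sub hpu).congr fun v =>
    (eq_sub_of_add_eq (stable_add_unstable_apply hsum b v)).symm

lemma one_sub_exp_sq_mul_norm_unstable_le (hΦinv : ∀ x, Φ 1 (Φ (-1) x) = x)
    (hsum : ∀ b, ps b + pu b = LinearMap.id)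
    (hS : ∀ t ≥ (0 : ℝ), ∀ x : Σ b, E b,
      ‖ps (Φ t x).1 (Φ t x).2‖ ≤ Real.exp (-(α * t)) * ‖ps x.1 x.2‖)
    (hU : ∀ t ≥ (0 : ℝ), ∀ x : Σ b, E b,
      Real.exp (α * t) * ‖pu x.1 x.2‖ ≤ ‖pu (Φ t x).1 (Φ t x).2‖) (b : B) (v : E b) :
    (1 - Real.exp (-α) ^ 2) * ‖pu b v‖ ≤ ‖v‖ + Real.exp (-α) * ‖(Φ (-1) ⟨b, v⟩).2‖ := by
  set y := Φ (-1) ⟨b, v⟩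
  set a := Real.exp (-α)
  have hy : Φ 1 y = ⟨b, v⟩ := hΦinv _
  have hs : ‖ps b v‖ ≤ a * ‖ps y.1 y.2‖ := by
    have h := hS 1 zero_le_one y
    rwa [hy, mul_one] at h
  have hu : Real.exp α * ‖pu y.1 y.2‖ ≤ ‖pu b v‖ := by
    have h := hU 1 zero_le_one y
    rwa [hy, mul_one] at h
  have hpu_v : ‖pu b v‖ ≤ ‖v‖ + ‖ps b v‖ := by
    rw [eq_sub_of_add_eq' (stable_add_unstable_apply hsum b v)]
    exact norm_sub_le _ _
  have hps_y : ‖ps y.1 y.2‖ ≤ ‖y.2‖ + ‖pu y.1 y.2‖ := by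
    rw [eq_sub_of_add_eq (stable_add_unstable_apply hsum y.1 y.2)]
    exact norm_sub_le _ _
  have ha : a * Real.exp α = 1 := by rw [← Real.exp_add, neg_add_cancel, Real.exp_zero]
  have hpu_y : a * ‖pu y.1 y.2‖ ≤ a ^ 2 * ‖pu b v‖ :=
    calc a * ‖pu y.1 y.2‖ = a ^ 2 * (Real.exp α * ‖pu y.1 y.2‖) := by
          linear_combination (-a * ‖pu y.1 y.2‖) * ha
      _ ≤ a ^ 2 * ‖pu b v‖ := by gcongr
  nlinarith [mul_le_mul_of_nonneg_left hps_y (Real.exp_pos (-α)).le]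

lemma continuous_unstable_of_hyperbolic [TopologicalSpace B]
    (hΦc : Continuous fun p : ℝ × (Σ b, E b) => Φ p.1 p.2)
    (hΦinv : ∀ x, Φ 1 (Φ (-1) x) = x) (hzero : ∀ b, (Φ (-1) ⟨b, 0⟩).2 = 0)
    (hsum : ∀ b, ps b + pu b = LinearMap.id) (hα : 0 < α)
    (hS : ∀ t ≥ (0 : ℝ), ∀ x : Σ b, E b,
      ‖ps (Φ t x).1 (Φ t x).2‖ ≤ Real.exp (-(α * t)) * ‖ps x.1 x.2‖)
    (hU : ∀ t ≥ (0 : ℝ), ∀ x : Σ b, E b,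
      Real.exp (α * t) * ‖pu x.1 x.2‖ ≤ ‖pu (Φ t x).1 (Φ t x).2‖) (b : B) :
    Continuous (pu b) := by
  have hc : 0 < 1 - Real.exp (-α) ^ 2 := by
    have := Real.exp_lt_one_iff.2 (neg_lt_zero.2 hα)
    nlinarith [Real.exp_pos (-α)]
  refine continuous_of_norm_le_of_tendsto_zero (pu b) (g := fun v =>
    (1 - Real.exp (-α) ^ 2)⁻¹ * (‖v‖ + Real.exp (-α) * ‖(Φ (-1) ⟨b, v⟩).2‖)) ?_ fun v => ?_
  · have hnorm : Continuous fun x : Σ b, E b => ‖x.2‖ := continuous_sigma fun _ => continuous_norm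
    have hw : Continuous fun v : E b => ‖(Φ (-1) ⟨b, v⟩).2‖ :=
      hnorm.comp (hΦc.comp (continuous_const.prodMk continuous_sigmaMk))
    have hg : Continuous fun v : E b =>
        (1 - Real.exp (-α) ^ 2)⁻¹ * (‖v‖ + Real.exp (-α) * ‖(Φ (-1) ⟨b, v⟩).2‖) := by
      fun_prop
    simpa [hzero] using hg.tendsto 0
  · rw [le_inv_mul_iff₀ hc]
    exact one_sub_exp_sq_mul_norm_unstable_le hΦinv hsum hS hU b v

lemma subset_closure_norm_unstable_lt_one [TopologicalSpace B]
    (hpu : ∀ b, (pu b).comp (pu b) = pu b) (hmix : ∀ b, (ps b).comp (pu b) = 0) :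
    {x : Σ b, E b | ‖ps x.1 x.2‖ ≤ 1 ∧ ‖pu x.1 x.2‖ ≤ 1} ⊆
      closure {x | ‖ps x.1 x.2‖ ≤ 1 ∧ ‖pu x.1 x.2‖ < 1} := by
  rintro ⟨b, v⟩ ⟨hs, hu⟩
  have hlim : Tendsto (fun c : ℝ => (⟨b, v - c • pu b v⟩ : Σ b, E b)) (𝓝[>] 0) (𝓝 ⟨b, v⟩) := by
    have hcont : Continuous fun c : ℝ => (⟨b, v - c • pu b v⟩ : Σ b, E b) :=
      continuous_sigmaMk.comp (continuous_const.sub (continuous_id.smul continuous_const))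
    simpa using (hcont.tendsto 0).mono_left nhdsWithin_le_nhds
  refine mem_closure_of_tendsto hlim ?_
  filter_upwards [Ioo_mem_nhdsGT one_pos] with c ⟨hc0, hc1⟩
  have hps_c : ps b (v - c • pu b v) = ps b v := by
    rw [map_sub, map_smul, ← LinearMap.comp_apply, hmix b, LinearMap.zero_apply, smul_zero,
      sub_zero]
  have hpu_c : pu b (v - c • pu b v) = (1 - c) • pu b v := by
    rw [map_sub, map_smul, ← LinearMap.comp_apply, hpu, sub_smul, one_smul]
  refine ⟨hps_c ▸ hs, ?_⟩
  rw [hpu_c, norm_smul, Real.norm_of_nonneg (by linarith)]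
  nlinarith

end Bundle
theorem stmt_15_general {B : Type*} [TopologicalSpace B]
    {E : B → Type*} [∀ b, NormedAddCommGroup (E b)] [∀ b, NormedSpace ℝ (E b)]
    (Φ : ℝ → (Σ b, E b) → (Σ b, E b))
    (hΦc : Continuous fun p : ℝ × (Σ b, E b) => Φ p.1 p.2)
    (hΦ0 : ∀ x, Φ 0 x = x) (hΦadd : ∀ s t x, Φ (s + t) x = Φ s (Φ t x))
    -- the stable/unstable projections: complementary fiberwise linear projections
    (ps pu : ∀ b, E b →ₗ[ℝ] E b)
    (hpu : ∀ b, (pu b).comp (pu b) = pu b)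
    (hsum : ∀ b, ps b + pu b = LinearMap.id)
    (hmix : ∀ b, (ps b).comp (pu b) = 0 ∧ (pu b).comp (ps b) = 0)
    -- hyperbolicity
    (α : ℝ) (hα : 0 < α)
    (hS : ∀ t ≥ (0 : ℝ), ∀ x : Σ b, E b,
      ‖ps (Φ t x).1 (Φ t x).2‖ ≤ Real.exp (-(α * t)) * ‖ps x.1 x.2‖)
    (hU : ∀ t ≥ (0 : ℝ), ∀ x : Σ b, E b,
      Real.exp (α * t) * ‖pu x.1 x.2‖ ≤ ‖pu (Φ t x).1 (Φ t x).2‖)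
    -- the zero section is invariant
    (hM0 : ∀ t, Φ t '' {x : Σ b, E b | x.2 = 0} = {x : Σ b, E b | x.2 = 0})
    (B1 B0 M0 : Set (Σ b, E b))
    (hB1 : B1 = {x | ‖ps x.1 x.2‖ ≤ 1 ∧ ‖pu x.1 x.2‖ ≤ 1})
    (hB0 : B0 = {x | ‖ps x.1 x.2‖ ≤ 1 ∧ ‖pu x.1 x.2‖ = 1})
    (hM0' : M0 = {x | x.2 = 0}) :
    -- (1) cl(B₁ ∖ B₀) = B₁ is an isolating neighborhood of the zero section M₀
    (closure (B1 \ B0) = B1 ∧ M0 ⊆ interior B1 ∧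
      ∀ x ∈ B1, (∀ t : ℝ, Φ t x ∈ B1) → x ∈ M0) ∧
    -- (2) B₀ is positively invariant with respect to B₁
    (∀ x ∈ B0, ∀ t ≥ (0 : ℝ), (∀ s, 0 ≤ s → s ≤ t → Φ s x ∈ B1) → Φ t x ∈ B0) ∧
    -- (3) orbits leaving B₁ in forward time exit through B₀
    (∀ x ∈ B1, (∃ t' > (0 : ℝ), Φ t' x ∉ B1) →
      ∃ tm ≥ (0 : ℝ), Φ tm x ∈ B0 ∧ ∀ t, 0 ≤ t → t ≤ tm → Φ t x ∈ B1) := by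
  subst hB1 hB0 hM0'
  have hΦinv : ∀ t x, Φ t (Φ (-t) x) = x := fun t x => by rw [← hΦadd, add_neg_cancel, hΦ0]
  have hpuC := continuous_unstable_of_hyperbolic hΦc (hΦinv 1)
    (fun b => (hM0 (-1)).subset (mem_image_of_mem _ rfl)) hsum hα hS hU
  let s := fun x : Σ b, E b => ‖ps x.1 x.2‖
  let u := fun x : Σ b, E b => ‖pu x.1 x.2‖
  have hsC : Continuous s := continuous_sigma fun b => (continuous_stable hsum (hpuC b)).norm
  have huC : Continuous u := continuous_sigma fun b => (hpuC b).norm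
  have hs0 : ∀ x, 0 ≤ s x := fun _ => norm_nonneg _
  have hu0 : ∀ x, 0 ≤ u x := fun _ => norm_nonneg _
  refine ⟨⟨?_, fun x hx => ?_, fun x _ hall => ?_⟩, fun x hx t ht hB => ?_,
    fun x hx ⟨t', ht', hout⟩ => ?_⟩
  · refine (closure_minimal sdiff_subset
      ((isClosed_le hsC continuous_const).inter (isClosed_le huC continuous_const))).antisymm ?_
    exact (subset_closure_norm_unstable_lt_one hpu fun b => (hmix b).1).trans
      (closure_mono fun x hx => ⟨⟨hx.1, hx.2.le⟩, fun h => hx.2.ne h.2⟩)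
  · obtain ⟨b, rfl⟩ : ∃ b, x = ⟨b, 0⟩ := ⟨x.1, Sigma.ext rfl (heq_of_eq hx)⟩
    exact subset_interior_setOf_le_one hsC huC (by simp [s, u])
  · obtain ⟨hsx, hux⟩ := le_zero_of_forall_apply_flow_le_one (s := s) (u := u) hα hΦinv hS hU hall
    show x.2 = 0
    rw [← stable_add_unstable_apply hsum x.1 x.2, norm_le_zero_iff.1 hsx, norm_le_zero_iff.1 hux,
      add_zero]
  · exact apply_flow_mem_exit_set (s := s) (u := u) hα.le hs0 hu0 hS hU hx ht (hB t ht le_rfl).2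
  · exact exists_exit_time (s := s) (u := u) hΦ0 hΦadd hα.le hs0 hu0 hS hU
      (huC.comp (hΦc.comp (continuous_id.prodMk continuous_const))) hx ht' hout

/-- Let `Φ` be a continuous linear flow on a vector bundle `V → M` over a
compact base, covering a base flow `φ`, with an invariant Whitney decomposition given by
fiberwise complementary linear projections `ps` (stable) and `pu` (unstable) and
hyperbolic estimates `|Φ_t v| ≤ e^{-αt}|v|` on `S = ker pu` and `|Φ_t v| ≥ e^{αt}|v|` on
`U = ker ps`, for `t ≥ 0`.  With `B₁ = {|v^s| ≤ 1, |v^u| ≤ 1}` and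
`B₀ = {|v^s| ≤ 1, |v^u| = 1}`, the pair `(B₁, B₀)` is an index pair for the zero
section `M₀`:  (1) `cl(B₁ ∖ B₀) = B₁` is an isolating neighborhood of `M₀`;
(2) `B₀` is positively invariant relative to `B₁`; (3) every orbit leaving `B₁` in
forward time exits through `B₀`. -/
theorem stmt_15 {B : Type*} [TopologicalSpace B] [CompactSpace B]
    {E : B → Type*} [∀ b, NormedAddCommGroup (E b)] [∀ b, NormedSpace ℝ (E b)]
    (φ : ℝ → B → B) (Φ : ℝ → (Σ b, E b) → (Σ b, E b))
    (hΦc : Continuous fun p : ℝ × (Σ b, E b) => Φ p.1 p.2)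
    (hΦ0 : ∀ x, Φ 0 x = x) (hΦadd : ∀ s t x, Φ (s + t) x = Φ s (Φ t x))
    (hcover : ∀ t x, (Φ t x).1 = φ t x.1)
    -- the stable/unstable projections: complementary fiberwise linear projections
    (ps pu : ∀ b, E b →ₗ[ℝ] E b)
    (hps : ∀ b, (ps b).comp (ps b) = ps b) (hpu : ∀ b, (pu b).comp (pu b) = pu b)
    (hsum : ∀ b, ps b + pu b = LinearMap.id)
    (hmix : ∀ b, (ps b).comp (pu b) = 0 ∧ (pu b).comp (ps b) = 0)
    -- hyperbolicity
    (α : ℝ) (hα : 0 < α)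
    (hS : ∀ t ≥ (0 : ℝ), ∀ x : Σ b, E b,
      ‖ps (Φ t x).1 (Φ t x).2‖ ≤ Real.exp (-(α * t)) * ‖ps x.1 x.2‖)
    (hU : ∀ t ≥ (0 : ℝ), ∀ x : Σ b, E b,
      Real.exp (α * t) * ‖pu x.1 x.2‖ ≤ ‖pu (Φ t x).1 (Φ t x).2‖)
    -- the zero section is invariant
    (hM0 : ∀ t, Φ t '' {x : Σ b, E b | x.2 = 0} = {x : Σ b, E b | x.2 = 0})
    (B1 B0 M0 : Set (Σ b, E b))
    (hB1 : B1 = {x | ‖ps x.1 x.2‖ ≤ 1 ∧ ‖pu x.1 x.2‖ ≤ 1})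
    (hB0 : B0 = {x | ‖ps x.1 x.2‖ ≤ 1 ∧ ‖pu x.1 x.2‖ = 1})
    (hM0' : M0 = {x | x.2 = 0}) :
    -- (1) cl(B₁ ∖ B₀) = B₁ is an isolating neighborhood of the zero section M₀
    (closure (B1 \ B0) = B1 ∧ M0 ⊆ interior B1 ∧
      ∀ x ∈ B1, (∀ t : ℝ, Φ t x ∈ B1) → x ∈ M0) ∧
    -- (2) B₀ is positively invariant with respect to B₁
    (∀ x ∈ B0, ∀ t ≥ (0 : ℝ), (∀ s, 0 ≤ s → s ≤ t → Φ s x ∈ B1) → Φ t x ∈ B0) ∧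
    -- (3) orbits leaving B₁ in forward time exit through B₀
    (∀ x ∈ B1, (∃ t' > (0 : ℝ), Φ t' x ∉ B1) →
      ∃ tm ≥ (0 : ℝ), Φ tm x ∈ B0 ∧ ∀ t, 0 ≤ t → t ≤ tm → Φ t x ∈ B1) :=
  stmt_15_general Φ hΦc hΦ0 hΦadd ps pu hpu hsum hmix α hα hS hU hM0 B1 B0 M0 hB1 hB0 hM0'
end

section
/- Under the hypotheses of the previous statement, the pointed quotient B_1/B_0 is homotopy equivalent to the Thom space of the unstable subbundle U restricted to M, i.e. to D(U)/S(U), where D(U) and S(U) are the unit disk and unit sphere bundles of U. Consequently the Conley index of the zero section of V is the homotopy class of the Thom space of U. -/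
/-- The setoid collapsing a subset `S` of `X` to a point. -/
def collapseSetoid (X : Type*) (S : Set X) : Setoid X where
  r a b := a = b ∨ (a ∈ S ∧ b ∈ S)
  iseqv := ⟨fun _ => Or.inl rfl,
    by rintro a b (rfl | ⟨h1, h2⟩); exacts [Or.inl rfl, Or.inr ⟨h2, h1⟩],
    by rintro a b c (rfl | ⟨h1, h2⟩) (rfl | ⟨h3, h4⟩) <;> tauto⟩

/-- The quotient space `X/S` obtained by collapsing `S` to a (base)point. -/
abbrev Collapse (X : Type*) [TopologicalSpace X] (S : Set X) : Type _ :=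
  Quotient (collapseSetoid X S)

lemma aux_pu_cont {B : Type*} [TopologicalSpace B]
    {E : B → Type*} [∀ b, NormedAddCommGroup (E b)] [∀ b, NormedSpace ℝ (E b)]
    (Φ : ℝ → (Σ b, E b) → (Σ b, E b))
    (hΦc : Continuous fun p : ℝ × (Σ b, E b) => Φ p.1 p.2)
    (ps pu : ∀ b, E b →ₗ[ℝ] E b)
    (hsum : ∀ b (v : E b), ps b v + pu b v = v)
    (α : ℝ) (hα : 0 < α)
    (hS : ∀ t ≥ (0 : ℝ), ∀ x : Σ b, E b,
      ‖ps (Φ t x).1 (Φ t x).2‖ ≤ Real.exp (-(α * t)) * ‖ps x.1 x.2‖)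
    (hU : ∀ t ≥ (0 : ℝ), ∀ x : Σ b, E b,
      Real.exp (α * t) * ‖pu x.1 x.2‖ ≤ ‖pu (Φ t x).1 (Φ t x).2‖)
    (b : B) : Continuous (pu b) := by
  set c : ℝ := Real.exp α - Real.exp (-α) with hc
  have hcpos : 0 < c := by
    have : Real.exp (-α) < Real.exp α := Real.exp_lt_exp.mpr (by linarith)
    simpa [hc] using sub_pos.mpr this
  -- continuous norm function on the sigma type
  have hN : Continuous fun x : Σ b, E b => ‖x.2‖ :=
    continuous_sigma_iff.mpr fun i => continuous_norm
  set φf : E b → ℝ := fun v => (‖(Φ 1 ⟨b, v⟩).2‖ + Real.exp (-α) * ‖v‖) / c with hφf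
  have hφcont : Continuous φf := by
    apply Continuous.div_const
    apply Continuous.add
    · exact hN.comp ((hΦc.comp (continuous_const.prodMk continuous_id)).comp
        continuous_sigmaMk)
    · exact continuous_const.mul continuous_norm
  have hbound : ∀ v : E b, ‖pu b v‖ ≤ φf v := by
    intro v
    have h1 := hU 1 zero_le_one ⟨b, v⟩
    have h2 := hS 1 zero_le_one ⟨b, v⟩
    set w := Φ 1 ⟨b, v⟩ with hw
    have h3 : ‖pu w.1 w.2‖ ≤ ‖w.2‖ + ‖ps w.1 w.2‖ := by
      have : pu w.1 w.2 = w.2 - ps w.1 w.2 := by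
        rw [eq_sub_iff_add_eq, add_comm]; exact hsum _ _
      rw [this]; exact norm_sub_le _ _
    have h4 : ‖ps b v‖ ≤ ‖v‖ + ‖pu b v‖ := by
      have : ps b v = v - pu b v := by rw [eq_sub_iff_add_eq]; exact hsum _ _
      rw [this]; exact norm_sub_le _ _
    rw [hφf]
    rw [le_div_iff₀ hcpos]
    have hα1 : α * 1 = α := mul_one α
    rw [hα1] at h1 h2
    nlinarith [norm_nonneg (ps b v), norm_nonneg (pu b v), norm_nonneg v,
      Real.exp_pos (-α)]
  -- get a local bound near 0, then a global linear bound
  have hφ0 : ContinuousAt φf 0 := hφcont.continuousAt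
  obtain ⟨δ, hδpos, hδ⟩ := Metric.continuousAt_iff.mp hφ0 1 one_pos
  have key : ∀ v : E b, ‖pu b v‖ ≤ ((φf 0 + 1) * (2 / δ)) * ‖v‖ := by
    intro v
    rcases eq_or_ne v 0 with rfl | hv
    · simp
    · have hnv : 0 < ‖v‖ := norm_pos_iff.mpr hv
      set s : ℝ := δ / (2 * ‖v‖) with hs
      have hspos : 0 < s := by positivity
      have hus : ‖s • v‖ = δ / 2 := by
        rw [norm_smul, Real.norm_eq_abs, abs_of_pos hspos, hs]
        field_simp
      have hdist : dist (s • v) 0 < δ := by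
        rw [dist_zero_right, hus]; linarith
      have hφu : φf (s • v) < φf 0 + 1 := by
        have := hδ hdist
        have := abs_lt.mp (by rwa [Real.dist_eq] at this)
        linarith [this.2]
      have h5 : ‖pu b (s • v)‖ ≤ φf 0 + 1 := le_of_lt (lt_of_le_of_lt (hbound _) hφu)
      have h6 : ‖pu b (s • v)‖ = s * ‖pu b v‖ := by
        rw [map_smul, norm_smul, Real.norm_eq_abs, abs_of_pos hspos]
      rw [h6] at h5
      rw [hs] at h5
      rw [div_mul_eq_mul_div, div_le_iff₀ (by positivity : (0:ℝ) < 2 * ‖v‖)] at h5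
      have h7 : (φf 0 + 1) * (2 / δ) * ‖v‖ = (φf 0 + 1) * (2 * ‖v‖) / δ := by
        field_simp
      rw [h7, le_div_iff₀ hδpos]
      linarith

  exact AddMonoidHomClass.continuous_of_bound (pu b) _ key


set_option maxHeartbeats 1000000 in
set_option synthInstance.maxHeartbeats 1000000 in
/-- In the setting of a hyperbolic linear flow `Φ` on `V = S ⊕ U` over a
compact base with `B₁ = {|v^s| ≤ 1, |v^u| ≤ 1}`, `B₀ = {|v^s| ≤ 1, |v^u| = 1}`, the
pointed quotient `B₁/B₀` is homotopy equivalent to the Thom space `D(U)/S(U)` of the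
unstable subbundle `U`; consequently the Conley index of the zero section is the
homotopy class of the Thom space of `U`. -/
theorem stmt_16 {B : Type*} [TopologicalSpace B] [CompactSpace B]
    {E : B → Type*} [∀ b, NormedAddCommGroup (E b)] [∀ b, NormedSpace ℝ (E b)]
    (φ : ℝ → B → B) (Φ : ℝ → (Σ b, E b) → (Σ b, E b))
    (hΦc : Continuous fun p : ℝ × (Σ b, E b) => Φ p.1 p.2)
    (hΦ0 : ∀ x, Φ 0 x = x) (hΦadd : ∀ s t x, Φ (s + t) x = Φ s (Φ t x))
    (hcover : ∀ t x, (Φ t x).1 = φ t x.1)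
    (ps pu : ∀ b, E b →ₗ[ℝ] E b)
    (hps : ∀ b, (ps b).comp (ps b) = ps b) (hpu : ∀ b, (pu b).comp (pu b) = pu b)
    (hsum : ∀ b, ps b + pu b = LinearMap.id)
    (hmix : ∀ b, (ps b).comp (pu b) = 0 ∧ (pu b).comp (ps b) = 0)
    (α : ℝ) (hα : 0 < α)
    (hS : ∀ t ≥ (0 : ℝ), ∀ x : Σ b, E b,
      ‖ps (Φ t x).1 (Φ t x).2‖ ≤ Real.exp (-(α * t)) * ‖ps x.1 x.2‖)
    (hU : ∀ t ≥ (0 : ℝ), ∀ x : Σ b, E b,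
      Real.exp (α * t) * ‖pu x.1 x.2‖ ≤ ‖pu (Φ t x).1 (Φ t x).2‖)
    (B1 B0 DU SU : Set (Σ b, E b))
    (hB1 : B1 = {x | ‖ps x.1 x.2‖ ≤ 1 ∧ ‖pu x.1 x.2‖ ≤ 1})
    (hB0 : B0 = {x | ‖ps x.1 x.2‖ ≤ 1 ∧ ‖pu x.1 x.2‖ = 1})
    -- the unit disk and sphere bundles of the unstable subbundle U = ker ps = im pu
    (hDU : DU = {x | ps x.1 x.2 = 0 ∧ ‖x.2‖ ≤ 1})
    (hSU : SU = {x | ps x.1 x.2 = 0 ∧ ‖x.2‖ = 1})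
    -- a basepoint on the unit sphere of U
    (x0 : Σ b, E b) (hx0B0 : x0 ∈ B0) (hx0SU : x0 ∈ SU)
    (hx0B1 : x0 ∈ B1) (hx0DU : x0 ∈ DU) :
    ∃ (f : Collapse {x : Σ b, E b // x ∈ B1} {x : {x : Σ b, E b // x ∈ B1} | (x : Σ b, E b) ∈ B0}
          → Collapse {x : Σ b, E b // x ∈ DU} {x : {x : Σ b, E b // x ∈ DU} | (x : Σ b, E b) ∈ SU})
      (g : Collapse {x : Σ b, E b // x ∈ DU} {x : {x : Σ b, E b // x ∈ DU} | (x : Σ b, E b) ∈ SU}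
          → Collapse {x : Σ b, E b // x ∈ B1} {x : {x : Σ b, E b // x ∈ B1} | (x : Σ b, E b) ∈ B0}),
      Continuous f ∧ Continuous g ∧
      -- f and g are pointed
      f (Quotient.mk (collapseSetoid _ _) ⟨x0, hx0B1⟩) = Quotient.mk (collapseSetoid _ _) ⟨x0, hx0DU⟩ ∧
      g (Quotient.mk (collapseSetoid _ _) ⟨x0, hx0DU⟩) = Quotient.mk (collapseSetoid _ _) ⟨x0, hx0B1⟩ ∧
      -- g ∘ f pointed-homotopic to the identity
      (∃ H, Continuous H ∧ (∀ q, H ((0 : unitInterval), q) = g (f q)) ∧ (∀ q, H ((1 : unitInterval), q) = q) ∧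
        ∀ t : unitInterval, H (t, Quotient.mk (collapseSetoid _ _) ⟨x0, hx0B1⟩) =
          Quotient.mk (collapseSetoid _ _) ⟨x0, hx0B1⟩) ∧
      -- f ∘ g pointed-homotopic to the identity
      (∃ H, Continuous H ∧ (∀ q, H ((0 : unitInterval), q) = f (g q)) ∧ (∀ q, H ((1 : unitInterval), q) = q) ∧
        ∀ t : unitInterval, H (t, Quotient.mk (collapseSetoid _ _) ⟨x0, hx0DU⟩) =
          Quotient.mk (collapseSetoid _ _) ⟨x0, hx0DU⟩) := by
  subst hB1 hB0 hDU hSU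
  -- basic algebraic facts about the projections
  have hsum' : ∀ b (v : E b), ps b v + pu b v = v := fun b v => by
    have := LinearMap.congr_fun (hsum b) v; simpa using this
  have hpuC : ∀ b, Continuous (pu b) := fun b =>
    aux_pu_cont Φ hΦc ps pu hsum' α hα hS hU b
  have hpsC : ∀ b, Continuous (ps b) := fun b => by
    have hcoe : ⇑(ps b) = fun v => v - pu b v := funext fun v => by
      rw [eq_sub_iff_add_eq]; exact hsum' b v
    rw [hcoe]; exact continuous_id.sub (hpuC b)
  have hpsps : ∀ b (v : E b), ps b (ps b v) = ps b v := fun b v =>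
    LinearMap.congr_fun (hps b) v
  have hpupu : ∀ b (v : E b), pu b (pu b v) = pu b v := fun b v =>
    LinearMap.congr_fun (hpu b) v
  have hpspu : ∀ b (v : E b), ps b (pu b v) = 0 := fun b v => by
    have := LinearMap.congr_fun (hmix b).1 v; simpa using this
  have hpups : ∀ b (v : E b), pu b (ps b v) = 0 := fun b v => by
    have := LinearMap.congr_fun (hmix b).2 v; simpa using this
  have hker : ∀ (x : Σ b, E b), ps x.1 x.2 = 0 → pu x.1 x.2 = x.2 := fun x h => by
    have := hsum' x.1 x.2; rwa [h, zero_add] at this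
  -- the sets
  set B1' : Set (Σ b, E b) := {x | ‖ps x.1 x.2‖ ≤ 1 ∧ ‖pu x.1 x.2‖ ≤ 1} with hB1'
  set B0' : Set (Σ b, E b) := {x | ‖ps x.1 x.2‖ ≤ 1 ∧ ‖pu x.1 x.2‖ = 1} with hB0'
  set DU' : Set (Σ b, E b) := {x | ps x.1 x.2 = 0 ∧ ‖x.2‖ ≤ 1} with hDU'
  set SU' : Set (Σ b, E b) := {x | ps x.1 x.2 = 0 ∧ ‖x.2‖ = 1} with hSU'
  -- the fiberwise projection on the total space
  set P : (Σ b, E b) → (Σ b, E b) := fun x => ⟨x.1, pu x.1 x.2⟩ with hP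
  have hPc : Continuous P :=
    continuous_sigma_iff.mpr fun b => continuous_sigmaMk.comp (hpuC b)
  -- the underlying map of f
  have hF0mem : ∀ x : {x : Σ b, E b // x ∈ B1'}, P x.1 ∈ DU' := fun x =>
    ⟨hpspu _ _, x.2.2⟩
  set F0 : {x : Σ b, E b // x ∈ B1'} → {x : Σ b, E b // x ∈ DU'} :=
    fun x => ⟨P x.1, hF0mem x⟩ with hF0
  -- the underlying map of g
  have hG0mem : ∀ x : {x : Σ b, E b // x ∈ DU'}, x.1 ∈ B1' := fun x =>
    ⟨by rw [x.2.1]; simp, by rw [hker x.1 x.2.1]; exact x.2.2⟩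
  set G0 : {x : Σ b, E b // x ∈ DU'} → {x : Σ b, E b // x ∈ B1'} :=
    fun x => ⟨x.1, hG0mem x⟩ with hG0
  -- f and g as maps of collapses
  have hfresp : ∀ (a b : {x : Σ b, E b // x ∈ B1'}),
      (collapseSetoid _ {x : {x : Σ b, E b // x ∈ B1'} | (x : Σ b, E b) ∈ B0'}).r a b →
      Quotient.mk (collapseSetoid _ {x : {x : Σ b, E b // x ∈ DU'} | (x : Σ b, E b) ∈ SU'}) (F0 a)
        = Quotient.mk _ (F0 b) := by
    rintro a b (rfl | ⟨h1, h2⟩)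
    · rfl
    · exact Quotient.sound (Or.inr ⟨⟨hpspu _ _, h1.2⟩, ⟨hpspu _ _, h2.2⟩⟩)
  have hgresp : ∀ (a b : {x : Σ b, E b // x ∈ DU'}),
      (collapseSetoid _ {x : {x : Σ b, E b // x ∈ DU'} | (x : Σ b, E b) ∈ SU'}).r a b →
      Quotient.mk (collapseSetoid _ {x : {x : Σ b, E b // x ∈ B1'} | (x : Σ b, E b) ∈ B0'}) (G0 a)
        = Quotient.mk _ (G0 b) := by
    rintro a b (rfl | ⟨h1, h2⟩)
    · rfl
    · refine Quotient.sound (Or.inr ⟨⟨?_, ?_⟩, ⟨?_, ?_⟩⟩)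
      · show ‖ps a.1.1 a.1.2‖ ≤ 1; rw [h1.1]; simp
      · show ‖pu a.1.1 a.1.2‖ = 1; rw [hker a.1 h1.1]; exact h1.2
      · show ‖ps b.1.1 b.1.2‖ ≤ 1; rw [h2.1]; simp
      · show ‖pu b.1.1 b.1.2‖ = 1; rw [hker b.1 h2.1]; exact h2.2
  refine ⟨Quotient.lift (fun x => Quotient.mk _ (F0 x)) hfresp,
    Quotient.lift (fun x => Quotient.mk _ (G0 x)) hgresp, ?_, ?_, ?_, ?_, ?_, ?_⟩
  · exact Continuous.quotient_lift
      (continuous_quot_mk.comp ((hPc.comp continuous_subtype_val).subtype_mk _)) _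
  · exact Continuous.quotient_lift
      (continuous_quot_mk.comp (continuous_subtype_val.subtype_mk _)) _
  · -- f pointed
    show Quotient.mk _ (F0 ⟨x0, hx0B1⟩) = Quotient.mk _ (⟨x0, hx0DU⟩ : {x : Σ b, E b // x ∈ DU'})
    apply congrArg
    apply Subtype.ext
    show (⟨x0.1, pu x0.1 x0.2⟩ : Σ b, E b) = x0
    rw [hker x0 hx0SU.1]
  · -- g pointed
    rfl
  · -- homotopy for g ∘ f
    set S1 : Set {x : Σ b, E b // x ∈ B1'} := {x | (x : Σ b, E b) ∈ B0'} with hS1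
    set G2 : (Σ b, E b) × ℝ → Σ b, E b :=
      fun p => ⟨p.1.1, p.2 • ps p.1.1 p.1.2 + pu p.1.1 p.1.2⟩ with hG2
    have hG2c : Continuous G2 := by
      have h1 : Continuous (fun q : Σ b, (E b × ℝ) =>
          (⟨q.1, q.2.2 • ps q.1 q.2.1 + pu q.1 q.2.1⟩ : Σ b, E b)) :=
        continuous_sigma_iff.mpr fun b => continuous_sigmaMk.comp
          ((continuous_snd.smul ((hpsC b).comp continuous_fst)).add
            ((hpuC b).comp continuous_fst))
      have heq : G2 = (fun q : Σ b, (E b × ℝ) =>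
          (⟨q.1, q.2.2 • ps q.1 q.2.1 + pu q.1 q.2.1⟩ : Σ b, E b)) ∘
          (Homeomorph.sigmaProdDistrib (Y := ℝ) (X := fun b => E b)) := by
        funext p; obtain ⟨⟨b, v⟩, t⟩ := p; rfl
      rw [heq]; exact h1.comp (Homeomorph.sigmaProdDistrib).continuous
    have hpsG2 : ∀ (x : Σ b, E b) (t : ℝ), ps (G2 (x,t)).1 (G2 (x,t)).2 = t • ps x.1 x.2 := by
      intro x t; show ps x.1 (t • ps x.1 x.2 + pu x.1 x.2) = _
      rw [map_add, map_smul, hpsps, hpspu, add_zero]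
    have hpuG2 : ∀ (x : Σ b, E b) (t : ℝ), pu (G2 (x,t)).1 (G2 (x,t)).2 = pu x.1 x.2 := by
      intro x t; show pu x.1 (t • ps x.1 x.2 + pu x.1 x.2) = _
      rw [map_add, map_smul, hpups, hpupu, smul_zero, zero_add]
    have hpsbd : ∀ (x : Σ b, E b) (t : unitInterval), ‖ps x.1 x.2‖ ≤ 1 →
        ‖ps (G2 (x,(t:ℝ))).1 (G2 (x,(t:ℝ))).2‖ ≤ 1 := by
      intro x t hx
      rw [hpsG2, norm_smul, Real.norm_eq_abs, abs_of_nonneg t.2.1]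
      nlinarith [t.2.2, t.2.1, norm_nonneg (ps x.1 x.2)]
    have hmem : ∀ (x : {x : Σ b, E b // x ∈ B1'}) (t : unitInterval),
        G2 (x.1, (t:ℝ)) ∈ B1' := by
      intro x t
      refine ⟨hpsbd x.1 t x.2.1, ?_⟩
      show ‖pu (G2 _).1 (G2 _).2‖ ≤ 1
      rw [hpuG2]; exact x.2.2
    set K : {x : Σ b, E b // x ∈ B1'} × unitInterval →
        Collapse {x : Σ b, E b // x ∈ B1'} S1 :=
      fun p => Quotient.mk _
        (⟨G2 (p.1.1, (p.2:ℝ)), hmem p.1 p.2⟩ : {x : Σ b, E b // x ∈ B1'}) with hK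
    have hKc : Continuous K := continuous_quot_mk.comp
      ((hG2c.comp ((continuous_subtype_val.comp continuous_fst).prodMk
        (continuous_subtype_val.comp continuous_snd))).subtype_mk _)
    set Kc : C({x : Σ b, E b // x ∈ B1'} × unitInterval,
        Collapse {x : Σ b, E b // x ∈ B1'} S1) := ⟨K, hKc⟩ with hKcdef
    have hcurresp : ∀ a b, (collapseSetoid _ S1).r a b → Kc.curry a = Kc.curry b := by
      rintro a b (rfl | ⟨h1, h2⟩)
      · rfl
      · refine ContinuousMap.ext fun t => ?_
        refine Quotient.sound (Or.inr ⟨⟨hpsbd a.1 t h1.1, ?_⟩, ⟨hpsbd b.1 t h2.1, ?_⟩⟩)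
        · show ‖pu (G2 _).1 (G2 _).2‖ = 1; rw [hpuG2]; exact h1.2
        · show ‖pu (G2 _).1 (G2 _).2‖ = 1; rw [hpuG2]; exact h2.2
    set G3 := Quotient.lift (fun x => Kc.curry x) hcurresp with hG3
    refine ⟨fun p => G3 p.2 p.1, ?_, ?_, ?_, ?_⟩
    · have hG3c : Continuous G3 := Continuous.quotient_lift Kc.curry.continuous _
      exact ContinuousEval.continuous_eval.comp
        ((hG3c.comp continuous_snd).prodMk continuous_fst)
    · refine fun q => Quotient.inductionOn q fun x => ?_
      have hval : G2 (x.1, ((0:unitInterval):ℝ)) = P x.1 := by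
        show (⟨x.1.1, ((0:unitInterval):ℝ) • ps x.1.1 x.1.2 + pu x.1.1 x.1.2⟩ : Σ b, E b)
          = ⟨x.1.1, pu x.1.1 x.1.2⟩
        exact congrArg (Sigma.mk x.1.1) (by rw [Set.Icc.coe_zero, zero_smul, zero_add])
      exact Quotient.sound (Or.inl (Subtype.ext hval))
    · refine fun q => Quotient.inductionOn q fun x => ?_
      have hv : ((1:unitInterval):ℝ) • ps x.1.1 x.1.2 + pu x.1.1 x.1.2 = x.1.2 := by
        rw [Set.Icc.coe_one, one_smul]; exact hsum' _ _
      have hval : G2 (x.1, ((1:unitInterval):ℝ)) = x.1 :=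
        calc G2 (x.1, ((1:unitInterval):ℝ))
            = ⟨x.1.1, x.1.2⟩ := congrArg (Sigma.mk x.1.1) hv
          _ = x.1 := rfl
      exact Quotient.sound (Or.inl (Subtype.ext hval))
    · intro t
      have hv : (t:ℝ) • ps x0.1 x0.2 + pu x0.1 x0.2 = x0.2 := by
        rw [hx0SU.1, smul_zero, zero_add, hker x0 hx0SU.1]
      have hval : G2 (x0, (t:ℝ)) = x0 :=
        calc G2 (x0, (t:ℝ)) = ⟨x0.1, x0.2⟩ := congrArg (Sigma.mk x0.1) hv
          _ = x0 := rfl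
      exact Quotient.sound (Or.inl (Subtype.ext hval))
  · -- homotopy for f ∘ g : it is the identity
    refine ⟨Prod.snd, continuous_snd, fun q => ?_, fun q => rfl, fun t => rfl⟩
    refine Quotient.inductionOn q fun x => ?_
    have hval : x.1 = P x.1 :=
      calc x.1 = ⟨x.1.1, x.1.2⟩ := rfl
        _ = ⟨x.1.1, pu x.1.1 x.1.2⟩ := (congrArg (Sigma.mk x.1.1) (hker x.1 x.2.1)).symm
    exact Quotient.sound (Or.inl (Subtype.ext hval))
end
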